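/- Let (A,B) be a reduced symbol with both A and B nonempty. If rank(A,B) > 4·lev(A,B)² + 2·lev(A,B), then max(A) ≠ max(B). -/
import Mathlib


open Matrix CategoryTheory

noncomputable section

/-- The rank of a symbol `(A, B)`:
`Σ_{a∈A} a + Σ_{b∈B} b − ⌊(|A|+|B|−1)²/4⌋`. -/
def symRank (A B : Finset ℕ) : ℤ :=
  (∑ a ∈ A, (a : ℤ)) + (∑ b ∈ B, (b : ℤ)) -
    Int.fdiv (((A.card : ℤ) + (B.card : ℤ) - 1) ^ 2) 4

/-- The maximum value of a symbol `(A, B)`: the largest element of `A ∪ B`. -/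
def symMax (A B : Finset ℕ) : ℤ := (((A ∪ B).sup id : ℕ) : ℤ)

/-- The defect of a symbol `(A, B)`: `|A| − |B|`. -/
def symDef (A B : Finset ℕ) : ℤ := (A.card : ℤ) - (B.card : ℤ)

/-- The level of a symbol `(A, B)`: `rank − max + ⌊(|A|+|B|−1)/2⌋`. -/
def symLev (A B : Finset ℕ) : ℤ :=
  symRank A B - symMax A B + Int.fdiv ((A.card : ℤ) + (B.card : ℤ) - 1) 2

lemma sum_lb : ∀ (n : ℕ) (S : Finset ℕ), S.card = n →
    (n : ℤ) * ((n : ℤ) - 1) ≤ 2 * ∑ x ∈ S, (x : ℤ) := by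
  intro n
  induction n with
  | zero =>
      intro S h
      have : 0 ≤ ∑ x ∈ S, (x : ℤ) := Finset.sum_nonneg fun x _ => by positivity
      simpa using by linarith
  | succ n ih =>
      intro S h
      have hne : S.Nonempty := Finset.card_pos.mp (by omega)
      have hmem := S.max'_mem hne
      set m := S.max' hne with hm
      have hcard : (S.erase m).card = n := by
        rw [Finset.card_erase_of_mem hmem, h]
        omega
      have hb : n ≤ m := by
        have hsub : S ⊆ Finset.range (m + 1) := fun x hx =>
          Finset.mem_range.mpr (Nat.lt_succ_of_le (S.le_max' x hx))
        have := Finset.card_le_card hsub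
        rw [Finset.card_range] at this
        omega
      have h1 := ih (S.erase m) hcard
      have h2 : ∑ x ∈ S, (x : ℤ) = (m : ℤ) + ∑ x ∈ S.erase m, (x : ℤ) :=
        (Finset.add_sum_erase S _ hmem).symm
      have hbz : (n : ℤ) ≤ (m : ℤ) := by exact_mod_cast hb
      push_cast
      nlinarith [h1, hbz]

lemma sum_lb_pos : ∀ (n : ℕ) (S : Finset ℕ), S.card = n → 0 ∉ S →
    (n : ℤ) * ((n : ℤ) + 1) ≤ 2 * ∑ x ∈ S, (x : ℤ) := by
  intro n
  induction n with
  | zero =>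
      intro S h _
      have : 0 ≤ ∑ x ∈ S, (x : ℤ) := Finset.sum_nonneg fun x _ => by positivity
      simpa using by linarith
  | succ n ih =>
      intro S h h0
      have hne : S.Nonempty := Finset.card_pos.mp (by omega)
      have hmem := S.max'_mem hne
      set m := S.max' hne with hm
      have hcard : (S.erase m).card = n := by
        rw [Finset.card_erase_of_mem hmem, h]
        omega
      have hb : n + 1 ≤ m := by
        have hsub : S ⊆ Finset.Icc 1 m := fun x hx => by
          have hx1 : x ≠ 0 := fun hx0 => h0 (hx0 ▸ hx)
          exact Finset.mem_Icc.mpr ⟨by omega, S.le_max' x hx⟩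
        have := Finset.card_le_card hsub
        rw [Nat.card_Icc] at this
        omega
      have h0' : 0 ∉ S.erase m := fun hx => h0 (Finset.mem_of_mem_erase hx)
      have h1 := ih (S.erase m) hcard h0'
      have h2 : ∑ x ∈ S, (x : ℤ) = (m : ℤ) + ∑ x ∈ S.erase m, (x : ℤ) :=
        (Finset.add_sum_erase S _ hmem).symm
      have hbz : (n : ℤ) + 1 ≤ (m : ℤ) := by exact_mod_cast hb
      push_cast
      nlinarith [h1, hbz]

lemma key_arith (a b : ℤ) (ha : 1 ≤ a) (hb : 1 ≤ b) :
    2 * Int.fdiv ((a + b - 1) ^ 2) 4 ≤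
      (a - 1) * (a - 2) + (b - 1) * b + 4 * Int.fdiv (a + b - 1) 2 := by
  rw [Int.fdiv_eq_ediv_of_nonneg _ (by norm_num), Int.fdiv_eq_ediv_of_nonneg _ (by norm_num)]
  rcases Int.even_or_odd (a + b) with ⟨k, hk⟩ | ⟨k, hk⟩
  · -- a + b = 2k, m = 2k-1 odd
    have hm : a + b - 1 = 2 * (k - 1) + 1 := by omega
    have hsq : (a + b - 1) ^ 2 = 4 * (k * k - k) + 1 := by rw [hm]; ring
    have hd1 : (4 * (k * k - k) + 1) / 4 = k * k - k := by omega
    have hd2 : (2 * (k - 1) + 1) / 2 = k - 1 := by omega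
    rw [hsq, hd1, hm, hd2]
    have hab : a + b = 2 * k := by omega
    nlinarith [sq_nonneg (2 * a - 2 * k - 1)]
  · -- a + b = 2k + 1, m = 2k even
    have hm : a + b - 1 = 2 * k := by omega
    have hsq : (a + b - 1) ^ 2 = 4 * (k * k) := by rw [hm]; ring
    have hd1 : (4 * (k * k)) / 4 = k * k := by omega
    have hd2 : (2 * k) / 2 = k := by omega
    rw [hsq, hd1, hm, hd2]
    have hab : a + b = 2 * k + 1 := by omega
    nlinarith [sq_nonneg (a - k - 1)]

lemma rank_le_two_lev (A B : Finset ℕ) (h0 : 0 ∉ B) (hA : A.Nonempty) (hB : B.Nonempty)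
    (heq : A.max' hA = B.max' hB) : symRank A B ≤ 2 * symLev A B := by
  set M := A.max' hA with hM
  have hMA : M ∈ A := A.max'_mem hA
  have hMB : M ∈ B := heq ▸ B.max'_mem hB
  have hmax : symMax A B = (M : ℤ) := by
    unfold symMax
    congr 1
    rw [Finset.sup_union]
    have h1 : A.sup id = M := (Finset.sup'_eq_sup hA id).symm
    have h2 : B.sup id = B.max' hB := (Finset.sup'_eq_sup hB id).symm
    rw [h1, h2, ← heq]
    exact sup_idem M
  have e1 : ∑ x ∈ A, (x : ℤ) = (M : ℤ) + ∑ x ∈ A.erase M, (x : ℤ) :=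
    (Finset.add_sum_erase A _ hMA).symm
  have e2 : ∑ x ∈ B, (x : ℤ) = (M : ℤ) + ∑ x ∈ B.erase M, (x : ℤ) :=
    (Finset.add_sum_erase B _ hMB).symm
  have ca : ((A.erase M).card : ℤ) = (A.card : ℤ) - 1 := by
    rw [Finset.card_erase_of_mem hMA]
    have := Finset.card_pos.mpr hA
    push_cast [Nat.cast_sub (by omega : 1 ≤ A.card)]
    ring
  have cb : ((B.erase M).card : ℤ) = (B.card : ℤ) - 1 := by
    rw [Finset.card_erase_of_mem hMB]
    have := Finset.card_pos.mpr hB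
    push_cast [Nat.cast_sub (by omega : 1 ≤ B.card)]
    ring
  have l1 := sum_lb (A.erase M).card (A.erase M) rfl
  rw [ca] at l1
  have h0' : 0 ∉ B.erase M := fun hx => h0 (Finset.mem_of_mem_erase hx)
  have l2 := sum_lb_pos (B.erase M).card (B.erase M) rfl h0'
  rw [cb] at l2
  have hca : (1 : ℤ) ≤ (A.card : ℤ) := by exact_mod_cast Finset.card_pos.mpr hA
  have hcb : (1 : ℤ) ≤ (B.card : ℤ) := by exact_mod_cast Finset.card_pos.mpr hB
  have hk := key_arith (A.card : ℤ) (B.card : ℤ) hca hcb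
  unfold symLev symRank
  rw [hmax]
  linarith [hk, l1, l2, e1, e2]

lemma symRank_comm (A B : Finset ℕ) : symRank A B = symRank B A := by
  unfold symRank
  have : ((A.card : ℤ) + (B.card : ℤ) - 1) = ((B.card : ℤ) + (A.card : ℤ) - 1) := by ring
  rw [this]
  ring

lemma symLev_comm (A B : Finset ℕ) : symLev A B = symLev B A := by
  unfold symLev
  rw [symRank_comm]
  have h1 : symMax A B = symMax B A := by unfold symMax; rw [Finset.union_comm]
  have h2 : ((A.card : ℤ) + (B.card : ℤ) - 1) = ((B.card : ℤ) + (A.card : ℤ) - 1) := by ring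
  rw [h1, h2]

/-- If `(A,B)` is a reduced symbol with `A` and `B` nonempty and
`rank(A,B) > 4·lev(A,B)² + 2·lev(A,B)`, then `max A ≠ max B`. -/
theorem symbol_max_ne_of_large_rank (A B : Finset ℕ) (hred : 0 ∉ A ∨ 0 ∉ B)
    (hA : A.Nonempty) (hB : B.Nonempty)
    (h : 4 * symLev A B ^ 2 + 2 * symLev A B < symRank A B) :
    A.max' hA ≠ B.max' hB := by
  intro hcon
  rcases hred with h0 | h0
  · have hle := rank_le_two_lev B A h0 hB hA hcon.symm
    rw [← symRank_comm, ← symLev_comm] at hle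
    nlinarith [sq_nonneg (symLev A B)]
  · have hle := rank_le_two_lev A B h0 hA hB hcon
    nlinarith [sq_nonneg (symLev A B)]
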